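/- Every VFD is a Schreier domain, i.e., it is integrally closed and for all nonzero x, y, z ∈ D with x dividing yz, there exist a, b ∈ D with x = ab, a dividing y and b dividing z. -/

import Mathlib

/-- `a` is a valuation element of the domain `D`: `a` is a nonzero nonunit and there is a
valuation overring `V` of `D` (inside the fraction field) with `aV ∩ D = aD`. -/
def IsValuationElement (D : Type*) [CommRing D] [IsDomain D] (a : D) : Prop :=
  a ≠ 0 ∧ ¬ IsUnit a ∧
  ∃ V : Subring (FractionRing D),
    Set.range (algebraMap D (FractionRing D)) ⊆ V ∧
    ValuationRing V ∧
    ∀ d : D, (∃ v ∈ V, algebraMap D (FractionRing D) d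
        = algebraMap D (FractionRing D) a * v) ↔ a ∣ d


/-- `D` is a valuation factorization domain: every nonzero nonunit is a finite product of
valuation elements. -/
def IsVFD (D : Type*) [CommRing D] [IsDomain D] : Prop :=
  ∀ a : D, a ≠ 0 → ¬ IsUnit a →
    ∃ l : Multiset D, (∀ x ∈ l, IsValuationElement D x) ∧ l.prod = a

/-!
An element of the fraction field that is integral over `D` lies in every valuation overring. Write
it as `s / t` with `t` a product of valuation elements; peeling off one factor `q` at a time,
`qV ∩ D = qD` shows that the denominator can be cancelled, so `D` is integrally closed.

If `aV ∩ D = aD` for a valuation overring `V`, then the radical of `aD` is prime: `V` is totally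
ordered by divisibility, and if `a ∣ (xy)ⁿ` with `y = xc`, `c ∈ V`, then `a ∣ y²ⁿ`. For a
valuation element `x ∤ a`, membership of `x` in that radical forces `a ∣ x`. Hence if `a` divides
a product of valuation elements, some factor `x` satisfies `x ∣ a` (cancel it and recurse) or
`a ∣ x`; this makes every valuation element primal, and primal elements are closed under products.
-/

section ValuationOverring

variable {D K : Type*} [CommRing D] [Field K] [Algebra D K] {V : ValuationSubring K}

/-- `aV ∩ D ⊆ aD`; for an overring `V` of `D` this is the condition `aV ∩ D = aD`. -/
def ValuationSubring.ReflectsDvd (V : ValuationSubring K) (a : D) : Prop :=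
  ∀ d : D, ∀ v ∈ V, algebraMap D K d = algebraMap D K a * v → a ∣ d

theorem ValuationSubring.ReflectsDvd.of_mul_right [IsDomain D] {a b : D}
    (h : V.ReflectsDvd (a * b)) (ha : a ≠ 0) : V.ReflectsDvd b := fun d v hv hd =>
  (mul_dvd_mul_iff_left ha).mp (h _ v hv (by rw [map_mul, map_mul, hd, mul_assoc]))

theorem ValuationSubring.ReflectsDvd.exists_algebraMap_eq [IsDomain D] [IsFractionRing D K]
    {a s : D} (ha : V.ReflectsDvd a) (ha0 : a ≠ 0) {x : K} (hx : x ∈ V)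
    (h : algebraMap D K a * x = algebraMap D K s) : ∃ d : D, algebraMap D K d = x := by
  obtain ⟨d, rfl⟩ := ha s x hx h.symm
  have haK : algebraMap D K a ≠ 0 := IsFractionRing.to_map_ne_zero_of_mem_nonZeroDivisors
    (mem_nonZeroDivisors_of_ne_zero ha0)
  exact ⟨d, mul_left_cancel₀ haK (by rw [h, map_mul])⟩

theorem Subring.mem_or_inv_mem_of_valuationRing [IsDomain D] [IsFractionRing D K]
    (V : Subring K) [ValuationRing V] (hDV : ∀ d : D, algebraMap D K d ∈ V) (x : K) :
    x ∈ V ∨ x⁻¹ ∈ V := by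
  obtain ⟨r, s, hs, rfl⟩ := IsFractionRing.div_surjective D x
  have hsK : algebraMap D K s ≠ 0 := IsFractionRing.to_map_ne_zero_of_mem_nonZeroDivisors hs
  obtain ⟨c, hc | hc⟩ := ValuationRing.cond (⟨_, hDV r⟩ : V) ⟨_, hDV s⟩
  · have hc' : algebraMap D K r * c = algebraMap D K s := congrArg Subtype.val hc
    rcases eq_or_ne (algebraMap D K r) 0 with hr | hr
    · exact .inl (by rw [hr, zero_div]; exact V.zero_mem)
    · exact .inr (by rw [inv_div, ← hc', mul_div_cancel_left₀ _ hr]; exact c.2)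
  · have hc' : algebraMap D K s * c = algebraMap D K r := congrArg Subtype.val hc
    exact .inl (by rw [← hc', mul_div_cancel_left₀ _ hsK]; exact c.2)

theorem ValuationSubring.mem_of_isIntegral (hDV : ∀ d : D, algebraMap D K d ∈ V) {x : K}
    (hx : IsIntegral D x) : x ∈ V := by
  have hxV : IsIntegral V x := IsIntegral.map_of_comp_eq
    ((algebraMap D K).codRestrict V hDV) (RingHom.id K) rfl hx
  obtain ⟨y, rfl⟩ := IsIntegrallyClosed.isIntegral_iff.mp hxV
  exact y.2

namespace ValuationSubring.ReflectsDvd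

variable {a : D}

theorem dvd_pow_of_eq_mul (hDV : ∀ d : D, algebraMap D K d ∈ V) (ha : V.ReflectsDvd a)
    {x y : D} {n : ℕ} (h : a ∣ (x * y) ^ n) {c : K} (hc : c ∈ V)
    (hxy : algebraMap D K y = algebraMap D K x * c) : a ∣ y ^ (2 * n) := by
  obtain ⟨e, he⟩ := h
  refine ha _ _ (V.mul_mem _ _ (hDV e) (V.toSubring.pow_mem hc n)) ?_
  calc algebraMap D K (y ^ (2 * n))
      = algebraMap D K x ^ n * algebraMap D K y ^ n * c ^ n := by
        rw [map_pow, two_mul, pow_add]; nth_rw 1 [hxy]; ring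
    _ = algebraMap D K a * (algebraMap D K e * c ^ n) := by
        rw [← map_pow, ← map_pow, ← map_mul, ← mul_pow, he, map_mul, mul_assoc]

theorem dvd_pow_or_dvd_pow (hDV : ∀ d : D, algebraMap D K d ∈ V) (ha : V.ReflectsDvd a)
    {x y : D} {n : ℕ} (h : a ∣ (x * y) ^ n) : a ∣ x ^ (2 * n) ∨ a ∣ y ^ (2 * n) := by
  obtain ⟨c, hc | hc⟩ := ValuationRing.cond (⟨_, hDV x⟩ : V) ⟨_, hDV y⟩
  · exact .inr (ha.dvd_pow_of_eq_mul hDV h c.2 (congrArg Subtype.val hc).symm)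
  · exact .inl (ha.dvd_pow_of_eq_mul hDV (mul_comm x y ▸ h) c.2 (congrArg Subtype.val hc).symm)

theorem isPrime_radical_span (hDV : ∀ d : D, algebraMap D K d ∈ V) (ha : V.ReflectsDvd a)
    (hu : ¬IsUnit a) : (Ideal.span {a}).radical.IsPrime := by
  refine Ideal.isPrime_iff.mpr ⟨by rwa [Ne, Ideal.radical_eq_top, Ideal.span_singleton_eq_top],
    fun {x y} ⟨n, hn⟩ => ?_⟩
  simp only [Ideal.mem_span_singleton] at hn
  exact (ha.dvd_pow_or_dvd_pow hDV hn).imp (fun h => ⟨_, Ideal.mem_span_singleton.mpr h⟩)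
    (fun h => ⟨_, Ideal.mem_span_singleton.mpr h⟩)

variable [IsDomain D] [IsFractionRing D K]

theorem dvd_pow_succ_of_dvd_pow_succ_succ (hDV : ∀ d : D, algebraMap D K d ∈ V) {x : D}
    (hx : V.ReflectsDvd x) (hx0 : x ≠ 0) (ha0 : a ≠ 0) (hxa : ¬x ∣ a) {n : ℕ}
    (h : a ∣ x ^ (n + 2)) : a ∣ x ^ (n + 1) := by
  have hxK : algebraMap D K x ≠ 0 := IsFractionRing.to_map_ne_zero_of_mem_nonZeroDivisors
    (mem_nonZeroDivisors_of_ne_zero hx0)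
  have haK : algebraMap D K a ≠ 0 := IsFractionRing.to_map_ne_zero_of_mem_nonZeroDivisors
    (mem_nonZeroDivisors_of_ne_zero ha0)
  have hw : algebraMap D K x / algebraMap D K a ∈ V := by
    have := (V.mem_or_inv_mem (algebraMap D K a / algebraMap D K x)).resolve_left fun hV =>
      hxa (hx a _ hV (mul_div_cancel₀ _ hxK).symm)
    rwa [inv_div] at this
  obtain ⟨e, he⟩ := h
  -- `e = x ^ (n + 2) / a = x * (x ^ n * (x / a))` lies in `xV ∩ D = xD`.
  obtain ⟨e', rfl⟩ : x ∣ e := hx e _ (V.mul_mem _ _ (hDV (x ^ n)) hw) <| by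
    rw [← mul_right_inj' haK, ← map_mul, ← he]
    field_simp
    simp only [map_pow]
    ring
  exact ⟨e', mul_left_cancel₀ hx0 (by rw [← pow_succ', he]; ring)⟩

theorem dvd_of_mem_radical (hDV : ∀ d : D, algebraMap D K d ∈ V) {x : D}
    (hx : V.ReflectsDvd x) (hx0 : x ≠ 0) (ha0 : a ≠ 0) (hxa : ¬x ∣ a)
    (h : x ∈ (Ideal.span {a}).radical) : a ∣ x := by
  obtain ⟨n, hn⟩ := h
  rw [Ideal.mem_span_singleton] at hn
  induction n with
  | zero => exact (pow_zero x ▸ hn).trans (one_dvd x)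
  | succ n ih =>
    cases n with
    | zero => rwa [pow_one] at hn
    | succ m => exact ih (hx.dvd_pow_succ_of_dvd_pow_succ_succ hDV hx0 ha0 hxa hn)

end ValuationSubring.ReflectsDvd

end ValuationOverring

section VFD

open Multiset

variable {D : Type*} [CommRing D] [IsDomain D]

theorem IsValuationElement.exists_valuationSubring {a : D} (h : IsValuationElement D a) :
    ∃ V : ValuationSubring (FractionRing D),
      (∀ d : D, algebraMap D _ d ∈ V) ∧ V.ReflectsDvd a := by
  obtain ⟨-, -, V, hDV, hV, ha⟩ := h
  have hDV' : ∀ d : D, algebraMap D _ d ∈ V := fun d => hDV ⟨d, rfl⟩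
  exact ⟨⟨V, V.mem_or_inv_mem_of_valuationRing hDV'⟩, hDV',
    fun d v hv hd => (ha d).mp ⟨v, hv, hd⟩⟩

theorem IsValuationElement.exists_algebraMap_eq {q s : D} (hq : IsValuationElement D q)
    {x : FractionRing D} (hx : IsIntegral D x) (h : algebraMap D _ q * x = algebraMap D _ s) :
    ∃ d : D, algebraMap D _ d = x := by
  obtain ⟨V, hDV, hqV⟩ := hq.exists_valuationSubring
  exact hqV.exists_algebraMap_eq hq.1 (V.mem_of_isIntegral hDV hx) h

theorem exists_algebraMap_eq_of_prod_mul {T : Multiset D}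
    (hT : ∀ q ∈ T, IsValuationElement D q) {x : FractionRing D} (hx : IsIntegral D x) {s : D}
    (h : algebraMap D _ T.prod * x = algebraMap D _ s) : ∃ d : D, algebraMap D _ d = x := by
  induction T using Multiset.induction_on generalizing x s with
  | empty => exact ⟨s, by simpa using h.symm⟩
  | cons q T ih =>
    obtain ⟨d, hd⟩ := (hT q (mem_cons_self q T)).exists_algebraMap_eq
      ((isIntegral_algebraMap (x := T.prod)).mul hx) (by rw [← h, prod_cons, map_mul, mul_assoc])
    exact ih (fun y hy => hT y (mem_cons_of_mem hy)) hx hd.symm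

theorem IsVFD.exists_prod_associated (h : IsVFD D) {b : D} (hb : b ≠ 0) :
    ∃ T : Multiset D, (∀ q ∈ T, IsValuationElement D q) ∧ Associated T.prod b := by
  by_cases hu : IsUnit b
  · exact ⟨0, by simp, by simpa using (associated_one_iff_isUnit.mpr hu).symm⟩
  · obtain ⟨T, hT, rfl⟩ := h b hb hu
    exact ⟨T, hT, .refl _⟩

theorem IsVFD.isIntegrallyClosed (h : IsVFD D) : IsIntegrallyClosed D :=
  (isIntegrallyClosed_iff (FractionRing D)).mpr fun {x} hx => by
    obtain ⟨⟨r, t⟩, hrt⟩ := IsLocalization.surj (nonZeroDivisors D) x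
    obtain ⟨T, hT, hTt⟩ := h.exists_prod_associated (nonZeroDivisors.ne_zero t.2)
    obtain ⟨c, hc⟩ := hTt.symm.dvd
    exact exists_algebraMap_eq_of_prod_mul hT hx (s := c * r) <| by
      rw [hc, map_mul, map_mul, mul_comm (algebraMap D _ _), mul_assoc, mul_comm _ x, hrt]

theorem ValuationSubring.ReflectsDvd.exists_mem_dvd_or_dvd
    {V : ValuationSubring (FractionRing D)} (hDV : ∀ d : D, algebraMap D _ d ∈ V) {a : D}
    (ha : V.ReflectsDvd a) (ha0 : a ≠ 0) (hu : ¬IsUnit a) {S : Multiset D}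
    (hS : ∀ x ∈ S, IsValuationElement D x) (h : a ∣ S.prod) : ∃ x ∈ S, x ∣ a ∨ a ∣ x := by
  obtain ⟨x, hxS, hx⟩ := ((ha.isPrime_radical_span hDV hu).multiset_prod_mem_iff_exists_mem S).mp
    (Ideal.le_radical (Ideal.mem_span_singleton.mpr h))
  obtain ⟨W, hDW, hxW⟩ := (hS x hxS).exists_valuationSubring
  exact ⟨x, hxS, or_iff_not_imp_left.mpr fun hxa =>
    hxW.dvd_of_mem_radical hDW (hS x hxS).1 ha0 hxa hx⟩

theorem ValuationSubring.ReflectsDvd.exists_dvd_prod_and_dvd_prod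
    {V : ValuationSubring (FractionRing D)} (hDV : ∀ d : D, algebraMap D _ d ∈ V) {a : D}
    (ha : V.ReflectsDvd a) (ha0 : a ≠ 0) {Y Z : Multiset D}
    (hY : ∀ x ∈ Y, IsValuationElement D x) (hZ : ∀ x ∈ Z, IsValuationElement D x)
    (h : a ∣ Y.prod * Z.prod) : ∃ a₁ a₂, a₁ ∣ Y.prod ∧ a₂ ∣ Z.prod ∧ a = a₁ * a₂ := by
  by_cases hu : IsUnit a
  · exact ⟨1, a, one_dvd _, hu.dvd, (one_mul a).symm⟩
  have hYZ : ∀ x ∈ Y + Z, IsValuationElement D x := fun x hx =>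
    (mem_add.mp hx).elim (hY x) (hZ x)
  obtain ⟨x, hx, ⟨a', rfl⟩ | hax⟩ :=
    ha.exists_mem_dvd_or_dvd hDV ha0 hu hYZ (by rwa [prod_add])
  · have hx0 : x ≠ 0 := (hYZ x hx).1
    have ha' := ha.of_mul_right hx0
    rcases mem_add.mp hx with hxY | hxZ
    · obtain ⟨Y, rfl⟩ := exists_cons_of_mem hxY
      rw [prod_cons, mul_assoc, mul_dvd_mul_iff_left hx0] at h
      obtain ⟨a₁, a₂, h₁, h₂, rfl⟩ := exists_dvd_prod_and_dvd_prod hDV ha'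
        (right_ne_zero_of_mul ha0) (fun y hy => hY y (mem_cons_of_mem hy)) hZ h
      exact ⟨x * a₁, a₂, prod_cons x Y ▸ mul_dvd_mul_left x h₁, h₂, (mul_assoc ..).symm⟩
    · obtain ⟨Z, rfl⟩ := exists_cons_of_mem hxZ
      rw [prod_cons, mul_left_comm, mul_dvd_mul_iff_left hx0] at h
      obtain ⟨a₁, a₂, h₁, h₂, rfl⟩ := exists_dvd_prod_and_dvd_prod hDV ha'
        (right_ne_zero_of_mul ha0) hY (fun y hy => hZ y (mem_cons_of_mem hy)) h
      exact ⟨a₁, x * a₂, h₁, prod_cons x Z ▸ mul_dvd_mul_left x h₂, mul_left_comm ..⟩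
  · rcases mem_add.mp hx with hxY | hxZ
    · exact ⟨a, 1, hax.trans (dvd_prod hxY), one_dvd _, (mul_one a).symm⟩
    · exact ⟨1, a, one_dvd _, hax.trans (dvd_prod hxZ), (one_mul a).symm⟩
termination_by card Y + card Z

theorem IsValuationElement.isPrimal (h : IsVFD D) {a : D} (ha : IsValuationElement D a) :
    IsPrimal a := by
  intro b c hbc
  rcases eq_or_ne b 0 with rfl | hb
  · exact ⟨a, 1, dvd_zero a, one_dvd c, (mul_one a).symm⟩
  rcases eq_or_ne c 0 with rfl | hc
  · exact ⟨1, a, one_dvd b, dvd_zero a, (one_mul a).symm⟩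
  obtain ⟨V, hDV, haV⟩ := ha.exists_valuationSubring
  obtain ⟨Y, hY, hYb⟩ := h.exists_prod_associated hb
  obtain ⟨Z, hZ, hZc⟩ := h.exists_prod_associated hc
  obtain ⟨a₁, a₂, h₁, h₂, rfl⟩ := haV.exists_dvd_prod_and_dvd_prod hDV ha.1 hY hZ
    (hbc.trans (hYb.mul_mul hZc).symm.dvd)
  exact ⟨a₁, a₂, h₁.trans hYb.dvd, h₂.trans hZc.dvd, rfl⟩

theorem IsVFD.decompositionMonoid (h : IsVFD D) : DecompositionMonoid D where
  primal a := by
    rcases eq_or_ne a 0 with rfl | ha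
    · exact isPrimal_zero
    obtain ⟨T, hT, u, rfl⟩ := h.exists_prod_associated ha
    exact IsPrimal.mul ((Submonoid.isPrimal D).multiset_prod_mem T fun x hx => (hT x hx).isPrimal h)
      u.isUnit.isPrimal

end VFD

theorem stmt17 (D : Type*) [CommRing D] [IsDomain D] (h : IsVFD D) :
    IsIntegrallyClosed D ∧
      ∀ x y z : D, x ≠ 0 → y ≠ 0 → z ≠ 0 → x ∣ y * z →
        ∃ a b : D, x = a * b ∧ a ∣ y ∧ b ∣ z := by
  have := h.decompositionMonoid
  refine ⟨h.isIntegrallyClosed, fun x y z _ _ _ hx => ?_⟩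
  obtain ⟨a, b, ha, hb, rfl⟩ := exists_dvd_and_dvd_of_dvd_mul hx
  exact ⟨a, b, rfl, ha, hb⟩
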